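/- arXiv:2303.17860 — 2 statements merged into one kernel-verified Lean document; each statement's English description precedes it below -/
import Mathlib

section
/- The divisor factor NDF is unbounded: for every real constant C there exists a positive integer N with NDF(N) > C. -/
/-- The divisor factor for `N`: the product of `(p - 1)/(p - 2)` over all odd primes `p`
dividing `N` with `p ^ 2 ≤ N`; the empty product is `1`. -/
noncomputable def NDF (N : ℕ) : ℝ :=
  ∏ p ∈ N.primeFactors.filter (fun p => 2 < p ∧ p ^ 2 ≤ N), ((p : ℝ) - 1) / ((p : ℝ) - 2)

private lemma weier (s : Finset ℕ) (f : ℕ → ℝ) (hf : ∀ i ∈ s, 0 ≤ f i) :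
    1 + ∑ i ∈ s, f i ≤ ∏ i ∈ s, (1 + f i) := by
  induction s using Finset.cons_induction with
  | empty => simp
  | cons a s ha ih =>
    rw [Finset.sum_cons, Finset.prod_cons]
    have h1 : 0 ≤ f a := hf a (Finset.mem_cons_self a s)
    have h2 : 1 + ∑ i ∈ s, f i ≤ ∏ i ∈ s, (1 + f i) :=
      ih fun i hi => hf i (Finset.mem_cons_of_mem hi)
    have h3 : 0 ≤ ∑ i ∈ s, f i := Finset.sum_nonneg fun i hi => hf i (Finset.mem_cons_of_mem hi)
    nlinarith

/-- The divisor factor `NDF` is unbounded: for every real constant `C` there is a positive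
integer `N` with `NDF N > C`. -/
theorem ndf_unbounded (C : ℝ) : ∃ N : ℕ, 0 < N ∧ C < NDF N := by
  set f : ℕ → ℝ := Set.indicator {p | Nat.Prime p} (fun n : ℕ => (1 : ℝ) / n) with hfdef
  have hnn : ∀ n, 0 ≤ f n := fun n => Set.indicator_nonneg (fun n _ => by positivity) n
  have htends := (not_summable_iff_tendsto_nat_atTop_of_nonneg hnn).mp
    not_summable_one_div_on_primes
  obtain ⟨m, hm⟩ := (htends.eventually_ge_atTop (C + 2)).exists
  refine ⟨(m.factorial) ^ 2, by positivity, ?_⟩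
  set N := (m.factorial) ^ 2 with hN
  set T := N.primeFactors.filter (fun p => 2 < p ∧ p ^ 2 ≤ N) with hT
  set A := (Finset.range m).filter Nat.Prime with hA
  set B := A.filter (fun p => 2 < p) with hB
  -- sum over range m equals sum over A
  have hS : ∑ i ∈ Finset.range m, f i = ∑ p ∈ A, (1 : ℝ) / p := by
    rw [hA, Finset.sum_filter]
    refine Finset.sum_congr rfl fun i _ => ?_
    by_cases h : Nat.Prime i <;> simp [hfdef, Set.indicator_apply, h]
  -- B ⊆ T
  have hBT : B ⊆ T := by
    intro p hp
    rw [hB, Finset.mem_filter] at hp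
    obtain ⟨hpA, hp2⟩ := hp
    rw [hA, Finset.mem_filter, Finset.mem_range] at hpA
    obtain ⟨hpm, hpp⟩ := hpA
    rw [hT, Finset.mem_filter, Nat.mem_primeFactors]
    have hple : p ≤ m.factorial :=
      le_trans hpm.le (Nat.self_le_factorial m)
    refine ⟨⟨hpp, ?_, by positivity⟩, hp2, ?_⟩
    · exact dvd_pow ((Nat.Prime.dvd_factorial hpp).mpr hpm.le) two_ne_zero
    · exact Nat.pow_le_pow_left hple 2
  -- bound sum over A \ B part
  have hsplit := Finset.sum_filter_add_sum_filter_not A (fun p => 2 < p) (fun p => (1 : ℝ) / p)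
  have hnotB : ∑ p ∈ A.filter (fun p => ¬ 2 < p), (1 : ℝ) / p ≤ 1 / 2 := by
    have hsub : A.filter (fun p => ¬ 2 < p) ⊆ {2} := by
      intro p hp
      rw [Finset.mem_filter, hA, Finset.mem_filter] at hp
      have h2le := hp.1.2.two_le
      have : p = 2 := by omega
      simp [this]
    calc ∑ p ∈ A.filter (fun p => ¬ 2 < p), (1 : ℝ) / p
        ≤ ∑ p ∈ ({2} : Finset ℕ), (1 : ℝ) / p :=
          Finset.sum_le_sum_of_subset_of_nonneg hsub (fun i _ _ => by positivity)
      _ = 1 / 2 := by norm_num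
  have hBsum : C + 2 - 1/2 ≤ ∑ p ∈ B, (1 : ℝ) / p := by
    have : C + 2 ≤ ∑ p ∈ A, (1 : ℝ) / p := hS ▸ hm
    rw [← hsplit] at this
    rw [hB]
    linarith
  have hTsum : C + 2 - 1/2 ≤ ∑ p ∈ T, (1 : ℝ) / p :=
    le_trans hBsum (Finset.sum_le_sum_of_subset_of_nonneg hBT (fun i _ _ => by positivity))
  -- each factor bound
  have hT3 : ∀ p ∈ T, 3 ≤ p := by
    intro p hp
    rw [hT, Finset.mem_filter] at hp
    omega
  have hfac : ∀ p ∈ T, 1 + (1 : ℝ) / p ≤ ((p : ℝ) - 1) / ((p : ℝ) - 2) := by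
    intro p hp
    have h3 : (3 : ℝ) ≤ (p : ℝ) := by exact_mod_cast hT3 p hp
    have hp0 : (0 : ℝ) < p := by linarith
    have hp2 : (0 : ℝ) < (p : ℝ) - 2 := by linarith
    have heq : 1 + (1 : ℝ) / p = ((p : ℝ) + 1) / p := by field_simp
    rw [heq, div_le_div_iff₀ hp0 hp2]
    nlinarith
  calc C < 1 + (C + 2 - 1/2) := by linarith
    _ ≤ 1 + ∑ p ∈ T, (1 : ℝ) / p := by linarith
    _ ≤ ∏ p ∈ T, (1 + (1 : ℝ) / p) := weier T _ (fun i _ => by positivity)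
    _ ≤ ∏ p ∈ T, ((p : ℝ) - 1) / ((p : ℝ) - 2) := by
        refine Finset.prod_le_prod (fun p _ => by positivity) hfac
    _ = NDF N := rfl
end

section
/- The average value of the divisor factor NDF equals the reciprocal of the twin prime constant: (1/x) · ∑_{n=1}^{x} NDF(n) tends, as x → ∞, to ∏_{p odd prime} (p−1)²/(p(p−2)), which equals the reciprocal of the twin prime constant C₂ = ∏_{p odd prime} (1 − 1/(p−1)²). -/
open Finset Filter Topology

namespace NDF

lemma odd_iff_forall_mem_primeFactors_two_lt {d : ℕ} (hd : d ≠ 0) :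
    Odd d ↔ ∀ p ∈ d.primeFactors, 2 < p := by
  refine ⟨fun h p hp => ?_, fun h => ?_⟩
  · have hp' := Nat.prime_of_mem_primeFactors hp
    refine lt_of_le_of_ne hp'.two_le fun h2 => ?_
    subst h2
    exact (Nat.not_even_iff_odd.2 h) (even_iff_two_dvd.2 (Nat.dvd_of_mem_primeFactors hp))
  · by_contra hodd
    have h2 : 2 ∈ d.primeFactors := Nat.mem_primeFactors.2
      ⟨Nat.prime_two, even_iff_two_dvd.1 (Nat.not_odd_iff_even.1 hodd), hd⟩
    exact lt_irrefl 2 (h 2 h2)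

lemma two_lt_of_mem_primeFactors {d p : ℕ} (hd : Odd d) (hp : p ∈ d.primeFactors) : 2 < p :=
  (odd_iff_forall_mem_primeFactors_two_lt hd.pos.ne').1 hd p hp

lemma squarefree_prod_of_prime {s : Finset ℕ} (hs : ∀ p ∈ s, p.Prime) :
    Squarefree (∏ p ∈ s, p) :=
  Finset.squarefree_prod_of_pairwise_isCoprime
    (fun p hp q hq hpq =>
      Nat.coprime_iff_isRelPrime.1 <| (Nat.coprime_primes (hs p hp) (hs q hq)).2 hpq)
    fun p hp => (hs p hp).prime.squarefree

section OddSquarefreeProd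

variable {R : Type*}

lemma cast_eq_prod_primeFactors [CommSemiring R] {d : ℕ} (hd : Squarefree d) :
    (d : R) = ∏ p ∈ d.primeFactors, (p : R) := by
  rw [← Nat.cast_prod, Nat.prod_primeFactors_of_squarefree hd]

def oddSquarefreeProd [CommMonoidWithZero R] (f : ℕ → R) (d : ℕ) : R :=
  if Squarefree d ∧ Odd d then ∏ p ∈ d.primeFactors, f p else 0

section CommMonoidWithZero

variable [CommMonoidWithZero R] (f : ℕ → R)

@[simp] lemma oddSquarefreeProd_zero : oddSquarefreeProd f 0 = 0 := by
  simp [oddSquarefreeProd]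

@[simp] lemma oddSquarefreeProd_one : oddSquarefreeProd f 1 = 1 := by
  simp [oddSquarefreeProd]

@[simp] lemma oddSquarefreeProd_two : oddSquarefreeProd f 2 = 0 := by
  simp [oddSquarefreeProd]

lemma oddSquarefreeProd_prime {p : ℕ} (hp : p.Prime) (hp2 : p ≠ 2) :
    oddSquarefreeProd f p = f p := by
  rw [oddSquarefreeProd, if_pos ⟨hp.prime.squarefree, hp.odd_of_ne_two hp2⟩, hp.primeFactors,
    prod_singleton]

lemma oddSquarefreeProd_prime_pow {p e : ℕ} (hp : p.Prime) (he : 2 ≤ e) :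
    oddSquarefreeProd f (p ^ e) = 0 := by
  rw [oddSquarefreeProd, if_neg]
  rintro ⟨hsq, -⟩
  rw [Nat.squarefree_pow_iff hp.ne_one (by omega)] at hsq
  omega

lemma oddSquarefreeProd_mul {m n : ℕ} (hmn : m.Coprime n) :
    oddSquarefreeProd f (m * n) = oddSquarefreeProd f m * oddSquarefreeProd f n := by
  simp only [oddSquarefreeProd, Nat.squarefree_mul hmn, Nat.odd_mul, hmn.primeFactors_mul,
    prod_union hmn.disjoint_primeFactors]
  split_ifs <;> simp_all

end CommMonoidWithZero

lemma tsum_oddSquarefreeProd_prime_pow [CommSemiring R] [TopologicalSpace R] (f : ℕ → R) {p : ℕ}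
    (hp : p.Prime) : ∑' e, oddSquarefreeProd f (p ^ e) = 1 + oddSquarefreeProd f p := by
  rw [tsum_eq_sum (s := range 2) fun e he =>
    oddSquarefreeProd_prime_pow f hp (by simp at he; omega)]
  simp [sum_range_succ]

lemma oddSquarefreeProd_mul_inv_cast [Field R] (f : ℕ → R) (d : ℕ) :
    oddSquarefreeProd f d * (d : R)⁻¹ = oddSquarefreeProd (fun p => f p * (p : R)⁻¹) d := by
  unfold oddSquarefreeProd
  split_ifs with h
  · rw [cast_eq_prod_primeFactors h.1, ← prod_inv_distrib, ← prod_mul_distrib]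
  · exact zero_mul _

lemma oddSquarefreeProd_nonneg {f : ℕ → ℝ} (hf : ∀ p, 2 < p → 0 ≤ f p) (d : ℕ) :
    0 ≤ oddSquarefreeProd f d := by
  unfold oddSquarefreeProd
  split_ifs with h
  · exact prod_nonneg fun p hp => hf p (two_lt_of_mem_primeFactors h.2 hp)
  · exact le_rfl

end OddSquarefreeProd

def primeSqSup (d : ℕ) : ℕ := d.primeFactors.sup (· ^ 2)

noncomputable def weight : ℕ → ℝ := oddSquarefreeProd fun p => ((p : ℝ) - 2)⁻¹

lemma primeFactors_subset_filter_iff {d n : ℕ} (hn : n ≠ 0) (hdn : d ∣ n) :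
    d.primeFactors ⊆ n.primeFactors.filter (fun p => 2 < p ∧ p ^ 2 ≤ n) ↔
      Odd d ∧ primeSqSup d ≤ n := by
  have hd : d ≠ 0 := ne_zero_of_dvd_ne_zero hn hdn
  rw [odd_iff_forall_mem_primeFactors_two_lt hd, primeSqSup, Finset.sup_le_iff,
    ← forall₂_and, subset_iff]
  exact forall₂_congr fun p hp => by
    simp [mem_filter, Nat.primeFactors_mono hdn hn hp]

lemma NDF_eq_sum_divisors {n : ℕ} (hn : n ≠ 0) :
    NDF n = ∑ d ∈ n.divisors with primeSqSup d ≤ n, weight d := by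
  set T := n.primeFactors.filter (fun p => 2 < p ∧ p ^ 2 ≤ n)
  have hT : ∀ p ∈ T, p.Prime ∧ 2 < p := fun p hp => by
    simp only [T, mem_filter, Nat.mem_primeFactors] at hp
    exact ⟨hp.1.1, hp.2.1⟩
  calc NDF n = ∏ p ∈ T, (1 + ((p : ℝ) - 2)⁻¹) := by
        refine prod_congr rfl fun p hp => ?_
        have : (p : ℝ) - 2 ≠ 0 := sub_ne_zero.2 (by exact_mod_cast (hT p hp).2.ne')
        field_simp
        ring
    _ = ∑ A ∈ T.powerset, ∏ p ∈ A, ((p : ℝ) - 2)⁻¹ := prod_one_add T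
    _ = ∑ d ∈ n.divisors with Squarefree d ∧ d.primeFactors ⊆ T,
          ∏ p ∈ d.primeFactors, ((p : ℝ) - 2)⁻¹ := by
        refine sum_nbij' (fun A => ∏ p ∈ A, p) Nat.primeFactors (fun A hA => ?_)
          (fun d hd => by simp_all) (fun A hA => ?_) (fun d hd => ?_) (fun A hA => ?_)
        · have hprime : ∀ p ∈ A, p.Prime := fun p hp => (hT p (mem_powerset.1 hA hp)).1
          have hdvd : ∏ p ∈ A, p ∣ n := prod_primes_dvd n (fun p hp => (hprime p hp).prime)
            fun p hp => Nat.dvd_of_mem_primeFactors (mem_filter.1 (mem_powerset.1 hA hp)).1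
          simp only [mem_filter, Nat.mem_divisors, Nat.primeFactors_prod hprime]
          exact ⟨⟨hdvd, hn⟩, squarefree_prod_of_prime hprime, mem_powerset.1 hA⟩
        · exact Nat.primeFactors_prod fun p hp => (hT p (mem_powerset.1 hA hp)).1
        · exact Nat.prod_primeFactors_of_squarefree (mem_filter.1 hd).2.1
        · rw [Nat.primeFactors_prod fun p hp => (hT p (mem_powerset.1 hA hp)).1]
    _ = ∑ d ∈ n.divisors with primeSqSup d ≤ n, weight d := by
        rw [sum_filter, sum_filter]
        refine sum_congr rfl fun d hd => ?_
        rw [Nat.mem_divisors] at hd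
        have hT_iff : d.primeFactors ⊆ T ↔ Odd d ∧ primeSqSup d ≤ n :=
          primeFactors_subset_filter_iff hn hd.1
        simp only [weight, oddSquarefreeProd, hT_iff]
        split_ifs <;> tauto

section Multiples

variable (d M x : ℕ)

lemma card_multiples_le : #{n ∈ Icc 1 x | d ∣ n ∧ M ≤ n} ≤ x / d := by
  rw [← Nat.Ioc_filter_dvd_card_eq_div]
  exact card_le_card fun n => by simp only [mem_filter, mem_Icc, mem_Ioc]; omega

lemma div_le_card_multiples_add : x / d ≤ #{n ∈ Icc 1 x | d ∣ n ∧ M ≤ n} + M := by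
  calc x / d = #{n ∈ Ioc 0 x | d ∣ n} := (Nat.Ioc_filter_dvd_card_eq_div x d).symm
    _ ≤ #({n ∈ Icc 1 x | d ∣ n ∧ M ≤ n} ∪ range M) := card_le_card fun n => by
        simp only [mem_filter, mem_Icc, mem_Ioc, mem_union, mem_range]; omega
    _ ≤ #{n ∈ Icc 1 x | d ∣ n ∧ M ≤ n} + M := (card_union_le _ _).trans_eq (by rw [card_range])

lemma card_multiples_div_le : (#{n ∈ Icc 1 x | d ∣ n ∧ M ≤ n} : ℝ) / x ≤ (d : ℝ)⁻¹ := by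
  rcases eq_or_ne x 0 with rfl | hx
  · simp
  calc (#{n ∈ Icc 1 x | d ∣ n ∧ M ≤ n} : ℝ) / x ≤ (x : ℝ) / d / x := by
        gcongr
        exact (Nat.cast_le.2 (card_multiples_le d M x)).trans Nat.cast_div_le
    _ = (d : ℝ)⁻¹ := div_div_cancel_left' (Nat.cast_ne_zero.2 hx)

lemma inv_sub_le_card_multiples_div (hx : x ≠ 0) :
    (d : ℝ)⁻¹ - (M + 1) / x ≤ (#{n ∈ Icc 1 x | d ∣ n ∧ M ≤ n} : ℝ) / x := by
  have hfloor : (x : ℝ) / d < (x / d : ℕ) + 1 := by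
    rw [← Nat.floor_div_eq_div (K := ℝ)]
    exact Nat.lt_floor_add_one _
  have hcount : ((x / d : ℕ) : ℝ) ≤ #{n ∈ Icc 1 x | d ∣ n ∧ M ≤ n} + M := by
    exact_mod_cast div_le_card_multiples_add d M x
  calc (d : ℝ)⁻¹ - (M + 1) / x = ((x : ℝ) / d - (M + 1)) / x := by
        rw [sub_div, div_div_cancel_left' (Nat.cast_ne_zero.2 hx)]
    _ ≤ (#{n ∈ Icc 1 x | d ∣ n ∧ M ≤ n} : ℝ) / x := by gcongr; linarith

lemma tendsto_card_multiples_div :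
    Tendsto (fun x : ℕ => (#{n ∈ Icc 1 x | d ∣ n ∧ M ≤ n} : ℝ) / x) atTop (𝓝 (d : ℝ)⁻¹) := by
  have hlower : Tendsto (fun x : ℕ => (d : ℝ)⁻¹ - (M + 1) / x) atTop (𝓝 (d : ℝ)⁻¹) := by
    simpa using tendsto_const_nhds.sub (tendsto_const_div_atTop_nhds_zero_nat ((M : ℝ) + 1))
  exact tendsto_of_tendsto_of_tendsto_of_le_of_le' hlower tendsto_const_nhds
    ((eventually_ne_atTop 0).mono fun x hx => inv_sub_le_card_multiples_div d M x hx)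
    (Eventually.of_forall fun x => card_multiples_div_le d M x)

end Multiples

noncomputable def ndfTerm (x d : ℕ) : ℝ :=
  weight d * (#{n ∈ Icc 1 x | d ∣ n ∧ primeSqSup d ≤ n} / x)

lemma sum_Icc_NDF (x : ℕ) :
    ∑ n ∈ Icc 1 x, NDF n =
      ∑ d ∈ Icc 1 x, #{n ∈ Icc 1 x | d ∣ n ∧ primeSqSup d ≤ n} * weight d := by
  calc ∑ n ∈ Icc 1 x, NDF n
        = ∑ n ∈ Icc 1 x, ∑ d ∈ n.divisors with primeSqSup d ≤ n, weight d :=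
          sum_congr rfl fun n hn => NDF_eq_sum_divisors (by simp at hn; omega)
    _ = ∑ d ∈ Icc 1 x, ∑ n ∈ Icc 1 x with d ∣ n ∧ primeSqSup d ≤ n, weight d := by
          refine sum_comm' fun n d => ?_
          simp only [mem_filter, mem_Icc, Nat.mem_divisors]
          constructor
          · rintro ⟨⟨h1, hx⟩, ⟨hdvd, -⟩, hsq⟩
            exact ⟨⟨⟨h1, hx⟩, hdvd, hsq⟩, Nat.pos_of_dvd_of_pos hdvd h1,
              (Nat.le_of_dvd h1 hdvd).trans hx⟩
          · rintro ⟨⟨⟨h1, hx⟩, hdvd, hsq⟩, -⟩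
            exact ⟨⟨h1, hx⟩, ⟨hdvd, by omega⟩, hsq⟩
    _ = _ := by simp only [sum_const, nsmul_eq_mul]

lemma average_NDF_eq_tsum (x : ℕ) :
    1 / (x : ℝ) * ∑ n ∈ Icc 1 x, NDF n = ∑' d, ndfTerm x d := by
  have hvanish : ∀ d ∉ Icc 1 x, ndfTerm x d = 0 := fun d hd => by
    rw [ndfTerm, filter_eq_empty_iff.2 fun n hn hdn => hd ?_]
    · simp
    rw [mem_Icc] at hn ⊢
    exact ⟨Nat.pos_of_dvd_of_pos hdn.1 hn.1, (Nat.le_of_dvd hn.1 hdn.1).trans hn.2⟩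
  rw [tsum_eq_sum hvanish, sum_Icc_NDF, mul_sum]
  exact sum_congr rfl fun d _ => by rw [ndfTerm]; ring

noncomputable def density : ℕ → ℝ := oddSquarefreeProd fun p => ((p : ℝ) * (p - 2))⁻¹

lemma weight_mul_inv_cast (d : ℕ) : weight d * (d : ℝ)⁻¹ = density d := by
  simp only [weight, density, oddSquarefreeProd_mul_inv_cast, mul_inv_rev]

lemma weight_nonneg (d : ℕ) : 0 ≤ weight d :=
  oddSquarefreeProd_nonneg (fun p hp => inv_nonneg.2 (by rw [sub_nonneg]; exact_mod_cast hp.le)) d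

lemma density_nonneg (d : ℕ) : 0 ≤ density d := by
  rw [← weight_mul_inv_cast]
  exact mul_nonneg (weight_nonneg d) (by positivity)

lemma rpow_three_halves {y : ℝ} (hy : 0 ≤ y) : y ^ (3 / 2 : ℝ) = y * √y := by
  rw [show (3 / 2 : ℝ) = 1 + 1 / 2 by norm_num, Real.rpow_add' hy (by norm_num), Real.rpow_one,
    Real.sqrt_eq_rpow]

-- `p (p - 2) ≥ p ^ (3/2)` fails only at `p = 3`, hence the factor `2` there.
lemma inv_mul_sub_two_le {p : ℕ} (hp : p.Prime) (hp2 : 2 < p) :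
    ((p : ℝ) * (p - 2))⁻¹ ≤ (if p = 3 then 2 else 1) * ((p : ℝ) ^ (3 / 2 : ℝ))⁻¹ := by
  rw [rpow_three_halves (Nat.cast_nonneg p)]
  split_ifs with h3
  · subst h3
    have : √(3 : ℝ) ≤ 2 := Real.sqrt_le_iff.2 (by norm_num)
    rw [← div_eq_mul_inv, le_div_iff₀ (by positivity)]
    norm_num
    linarith
  · have h4 : (4 : ℝ) ≤ p := by
      have : p ≠ 4 := by rintro rfl; norm_num at hp
      exact_mod_cast (by omega : 4 ≤ p)
    have : √(p : ℝ) ≤ p - 2 := Real.sqrt_le_iff.2 ⟨by linarith, by nlinarith⟩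
    rw [one_mul]
    gcongr

lemma density_le (d : ℕ) : density d ≤ 2 * ((d : ℝ) ^ (3 / 2 : ℝ))⁻¹ := by
  unfold density oddSquarefreeProd
  split_ifs with h
  · have hrpow : (d : ℝ) ^ (3 / 2 : ℝ) = ∏ p ∈ d.primeFactors, (p : ℝ) ^ (3 / 2 : ℝ) := by
      rw [cast_eq_prod_primeFactors h.1, Real.finsetProd_rpow _ _ fun p _ => Nat.cast_nonneg p]
    calc ∏ p ∈ d.primeFactors, ((p : ℝ) * (p - 2))⁻¹
        ≤ ∏ p ∈ d.primeFactors, (if p = 3 then 2 else 1) * ((p : ℝ) ^ (3 / 2 : ℝ))⁻¹ := by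
          refine prod_le_prod (fun p hp => ?_) fun p hp => inv_mul_sub_two_le
            (Nat.prime_of_mem_primeFactors hp) (two_lt_of_mem_primeFactors h.2 hp)
          have : (2 : ℝ) < p := by exact_mod_cast two_lt_of_mem_primeFactors h.2 hp
          exact inv_nonneg.2 (mul_nonneg (by linarith) (by linarith))
      _ = (if 3 ∈ d.primeFactors then 2 else 1) * ((d : ℝ) ^ (3 / 2 : ℝ))⁻¹ := by
          rw [prod_mul_distrib, prod_ite_eq', hrpow, prod_inv_distrib]
      _ ≤ 2 * ((d : ℝ) ^ (3 / 2 : ℝ))⁻¹ := by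
          gcongr
          split_ifs <;> norm_num
  · positivity

lemma summable_density_bound : Summable fun d : ℕ => 2 * ((d : ℝ) ^ (3 / 2 : ℝ))⁻¹ :=
  (Real.summable_nat_rpow_inv.2 (by norm_num)).mul_left 2

lemma tendsto_ndfTerm (d : ℕ) : Tendsto (fun x => ndfTerm x d) atTop (𝓝 (density d)) := by
  rw [← weight_mul_inv_cast]
  exact (tendsto_card_multiples_div d (primeSqSup d)).const_mul (weight d)

lemma norm_ndfTerm_le (x d : ℕ) : ‖ndfTerm x d‖ ≤ 2 * ((d : ℝ) ^ (3 / 2 : ℝ))⁻¹ := by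
  have hnonneg : 0 ≤ ndfTerm x d := mul_nonneg (weight_nonneg d) (by positivity)
  rw [Real.norm_of_nonneg hnonneg]
  calc ndfTerm x d ≤ weight d * (d : ℝ)⁻¹ :=
        mul_le_mul_of_nonneg_left (card_multiples_div_le d _ x) (weight_nonneg d)
    _ = density d := weight_mul_inv_cast d
    _ ≤ _ := density_le d

lemma one_add_density_prime {p : ℕ} (hp : p.Prime) (hp2 : 2 < p) :
    1 + density p = ((p : ℝ) - 1) ^ 2 / (p * (p - 2)) := by
  have : (p : ℝ) - 2 ≠ 0 := sub_ne_zero.2 (by exact_mod_cast hp2.ne')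
  have : (p : ℝ) ≠ 0 := by exact_mod_cast hp.ne_zero
  rw [density, oddSquarefreeProd_prime _ hp hp2.ne']
  field_simp
  ring

lemma hasProd_density :
    HasProd (fun p : {p : ℕ // p.Prime ∧ 2 < p} => ((p.1 : ℝ) - 1) ^ 2 / (p.1 * (p.1 - 2)))
      (∑' d, density d) := by
  have heuler := EulerProduct.eulerProduct_hasProd_mulIndicator (oddSquarefreeProd_one _)
    (fun hmn => oddSquarefreeProd_mul _ hmn)
    (summable_density_bound.of_nonneg_of_le (fun d => norm_nonneg _)
      fun d => (Real.norm_of_nonneg (density_nonneg d)).trans_le (density_le d))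
    (oddSquarefreeProd_zero _)
  refine (hasProd_subtype_iff_mulIndicator (s := {p | p.Prime ∧ 2 < p})
    (f := fun p : ℕ => ((p : ℝ) - 1) ^ 2 / (p * (p - 2)))).2
    (heuler.congr_fun fun p => ?_)
  by_cases hp : p.Prime
  · rw [Set.mulIndicator_of_mem (s := {p : ℕ | p.Prime}) hp,
    show ∑' e, density (p ^ e) = 1 + density p from tsum_oddSquarefreeProd_prime_pow _ hp]
    rcases hp.two_le.eq_or_lt with rfl | hp2
    · rw [Set.mulIndicator_of_notMem (s := {p : ℕ | p.Prime ∧ 2 < p}) (by simp), density,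
        oddSquarefreeProd_two, add_zero]
    · rw [Set.mulIndicator_of_mem (s := {p : ℕ | p.Prime ∧ 2 < p}) ⟨hp, hp2⟩,
        one_add_density_prime hp hp2]
  · rw [Set.mulIndicator_of_notMem (s := {p : ℕ | p.Prime ∧ 2 < p}) fun h => hp h.1,
      Set.mulIndicator_of_notMem (s := {p : ℕ | p.Prime}) hp]

lemma one_le_tsum_density : 1 ≤ ∑' d, density d := by
  have hsum : Summable density := summable_density_bound.of_nonneg_of_le density_nonneg density_le
  simpa [density] using hsum.le_tsum 1 fun d _ => density_nonneg d

lemma one_sub_one_div_sq_eq_inv {y : ℝ} (hy : y ≠ 1) :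
    1 - 1 / (y - 1) ^ 2 = ((y - 1) ^ 2 / (y * (y - 2)))⁻¹ := by
  have : y - 1 ≠ 0 := sub_ne_zero.2 hy
  rw [inv_div]
  field_simp
  ring

end NDF

open NDF in
/-- The average of the divisor factor `NDF` over `1, …, x` tends, as `x → ∞`, to
`∏_{p odd prime} (p - 1)² / (p (p - 2))`, which is the reciprocal of the twin prime
constant `C₂ = ∏_{p odd prime} (1 - 1/(p - 1)²)`. -/
theorem ndf_average_eq_inv_twin_prime_constant :
    Filter.Tendsto
      (fun x : ℕ => (1 / (x : ℝ)) * ∑ n ∈ Finset.Icc 1 x, NDF n) Filter.atTop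
      (nhds (∏' p : {p : ℕ // p.Prime ∧ 2 < p},
        ((p.1 : ℝ) - 1) ^ 2 / ((p.1 : ℝ) * ((p.1 : ℝ) - 2)))) ∧
    (∏' p : {p : ℕ // p.Prime ∧ 2 < p},
        ((p.1 : ℝ) - 1) ^ 2 / ((p.1 : ℝ) * ((p.1 : ℝ) - 2))) =
      (∏' p : {p : ℕ // p.Prime ∧ 2 < p}, (1 - 1 / ((p.1 : ℝ) - 1) ^ 2))⁻¹ := by
  rw [hasProd_density.tprod_eq]
  refine ⟨?_, ?_⟩
  · simp_rw [average_NDF_eq_tsum]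
    exact tendsto_tsum_of_dominated_convergence summable_density_bound tendsto_ndfTerm
      (Eventually.of_forall fun x => norm_ndfTerm_le x)
  · have hne : ∑' d, density d ≠ 0 := (zero_lt_one.trans_le one_le_tsum_density).ne'
    have hinv := (hasProd_density.inv₀ hne).congr_fun fun p : {p : ℕ // p.Prime ∧ 2 < p} =>
      one_sub_one_div_sq_eq_inv (Nat.one_lt_cast.2 (one_lt_two.trans p.2.2)).ne'
    rw [hinv.tprod_eq, inv_inv]
end
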